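/- arXiv:1503.00768 — 2 statements merged into one kernel-verified Lean document; each statement's English description precedes it below -/
import Mathlib

section
/- With the operators $K_r, L_r$ associated to a conformal metric of constant curvature $-1$, the two expressions $4 L_{r+1} K_r + r(r+1)$ and $4 K_{r-1} L_r + r(r-1)$ define the same second-order operator $D_r$ on smooth local sections of $S(r)$. -/
open Complex MeasureTheory

/-- Wirtinger derivative `∂/∂z`. -/
noncomputable def dZ (f : ℂ → ℂ) (z : ℂ) : ℂ :=
  (fderiv ℝ f z 1 - Complex.I * fderiv ℝ f z Complex.I) / 2

/-- Wirtinger derivative `∂/∂z̄`. -/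
noncomputable def dZbar (f : ℂ → ℂ) (z : ℂ) : ℂ :=
  (fderiv ℝ f z 1 + Complex.I * fderiv ℝ f z Complex.I) / 2

/-- `K_r f = λ^{r-1} ∂_z (λ^{-r} f)`. -/
noncomputable def Kop (lam : ℂ → ℝ) (r : ℤ) (f : ℂ → ℂ) (z : ℂ) : ℂ :=
  (lam z : ℂ) ^ (r - 1) * dZ (fun w => (lam w : ℂ) ^ (-r) * f w) z

/-- `L_r f = λ^{-r-1} ∂_z̄ (λ^{r} f)`. -/
noncomputable def Lop (lam : ℂ → ℝ) (r : ℤ) (f : ℂ → ℂ) (z : ℂ) : ℂ :=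
  (lam z : ℂ) ^ (-r - 1) * dZbar (fun w => (lam w : ℂ) ^ r * f w) z

/-- Constant curvature `-1`: `4 ∂_z ∂_z̄ log λ = λ²` on `U`. -/
def CurvMinusOne (lam : ℂ → ℝ) (U : Set ℂ) : Prop :=
  ∀ z ∈ U, 4 * dZ (fun w => dZbar (fun u => (Real.log (lam u) : ℂ)) w) z = (lam z : ℂ) ^ 2

theorem dZ_congr {f g : ℂ → ℂ} {z : ℂ} (h : f =ᶠ[nhds z] g) : dZ f z = dZ g z := by
  unfold dZ; rw [h.fderiv_eq]
theorem dZbar_congr {f g : ℂ → ℂ} {z : ℂ} (h : f =ᶠ[nhds z] g) : dZbar f z = dZbar g z := by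
  unfold dZbar; rw [h.fderiv_eq]

theorem dZ_mul {f g : ℂ → ℂ} {z : ℂ} (hf : DifferentiableAt ℝ f z) (hg : DifferentiableAt ℝ g z) :
    dZ (fun w => f w * g w) z = dZ f z * g z + f z * dZ g z := by
  unfold dZ
  rw [fderiv_fun_mul hf hg]
  simp only [ContinuousLinearMap.add_apply, ContinuousLinearMap.smul_apply, smul_eq_mul]
  ring
theorem dZbar_mul {f g : ℂ → ℂ} {z : ℂ} (hf : DifferentiableAt ℝ f z) (hg : DifferentiableAt ℝ g z) :
    dZbar (fun w => f w * g w) z = dZbar f z * g z + f z * dZbar g z := by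
  unfold dZbar
  rw [fderiv_fun_mul hf hg]
  simp only [ContinuousLinearMap.add_apply, ContinuousLinearMap.smul_apply, smul_eq_mul]
  ring

theorem dZbar_sub {f g : ℂ → ℂ} {z : ℂ} (hf : DifferentiableAt ℝ f z) (hg : DifferentiableAt ℝ g z) :
    dZbar (fun w => f w - g w) z = dZbar f z - dZbar g z := by
  unfold dZbar; rw [fderiv_fun_sub hf hg]
  simp only [ContinuousLinearMap.sub_apply]; ring
theorem dZ_add {f g : ℂ → ℂ} {z : ℂ} (hf : DifferentiableAt ℝ f z) (hg : DifferentiableAt ℝ g z) :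
    dZ (fun w => f w + g w) z = dZ f z + dZ g z := by
  unfold dZ; rw [fderiv_fun_add hf hg]
  simp only [ContinuousLinearMap.add_apply]; ring

theorem dZ_const_mul {f : ℂ → ℂ} {z : ℂ} (c : ℂ) (hf : DifferentiableAt ℝ f z) :
    dZ (fun w => c * f w) z = c * dZ f z := by
  unfold dZ; rw [fderiv_const_mul hf c]
  simp only [ContinuousLinearMap.smul_apply, smul_eq_mul]; ring
theorem dZbar_const_mul {f : ℂ → ℂ} {z : ℂ} (c : ℂ) (hf : DifferentiableAt ℝ f z) :
    dZbar (fun w => c * f w) z = c * dZbar f z := by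
  unfold dZbar; rw [fderiv_const_mul hf c]
  simp only [ContinuousLinearMap.smul_apply, smul_eq_mul]; ring

theorem exp_comp_hasFDerivAt {h : ℂ → ℂ} {z : ℂ} (hh : DifferentiableAt ℝ h z) :
    HasFDerivAt (fun w => Complex.exp (h w)) (Complex.exp (h z) • fderiv ℝ h z) z := by
  have h1 : HasFDerivAt Complex.exp
      (((ContinuousLinearMap.smulRight (1 : ℂ →L[ℂ] ℂ) (Complex.exp (h z))).restrictScalars ℝ))
      (h z) := ((Complex.hasDerivAt_exp (h z)).hasFDerivAt).restrictScalars ℝ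
  have := h1.comp z hh.hasFDerivAt
  refine this.congr_fderiv ?_
  ext v
  simp [mul_comm]

theorem dZ_exp {h : ℂ → ℂ} {z : ℂ} (hh : DifferentiableAt ℝ h z) :
    dZ (fun w => Complex.exp (h w)) z = Complex.exp (h z) * dZ h z := by
  unfold dZ
  rw [(exp_comp_hasFDerivAt hh).fderiv]
  simp only [ContinuousLinearMap.smul_apply, smul_eq_mul]; ring
theorem dZbar_exp {h : ℂ → ℂ} {z : ℂ} (hh : DifferentiableAt ℝ h z) :
    dZbar (fun w => Complex.exp (h w)) z = Complex.exp (h z) * dZbar h z := by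
  unfold dZbar
  rw [(exp_comp_hasFDerivAt hh).fderiv]
  simp only [ContinuousLinearMap.smul_apply, smul_eq_mul]; ring

theorem dZbar_dZ_comm {f : ℂ → ℂ} {z : ℂ} (hf : ContDiffAt ℝ 2 f z) :
    dZbar (dZ f) z = dZ (dZbar f) z := by
  have hsymm : IsSymmSndFDerivAt ℝ f z := hf.isSymmSndFDerivAt (by simp)
  have hD : DifferentiableAt ℝ (fderiv ℝ f) z :=
    (hf.fderiv_right (m := 1) (by norm_num)).differentiableAt (by norm_num)
  set H := fderiv ℝ (fderiv ℝ f) z with hH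
  have key : ∀ v : ℂ, HasFDerivAt (fun w => fderiv ℝ f w v)
      ((ContinuousLinearMap.apply ℝ ℂ v).comp H) z :=
    fun v => ((ContinuousLinearMap.apply ℝ ℂ v).hasFDerivAt).comp z hD.hasFDerivAt
  have edz : dZ f = fun w => (2:ℂ)⁻¹ *
      (fderiv ℝ f w 1 - Complex.I * fderiv ℝ f w Complex.I) := by
    funext w; unfold dZ; ring
  have edzb : dZbar f = fun w => (2:ℂ)⁻¹ *
      (fderiv ℝ f w 1 + Complex.I * fderiv ℝ f w Complex.I) := by
    funext w; unfold dZbar; ring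
  have h1 : HasFDerivAt (dZ f)
      ((2:ℂ)⁻¹ • (((ContinuousLinearMap.apply ℝ ℂ 1).comp H) -
        Complex.I • ((ContinuousLinearMap.apply ℝ ℂ Complex.I).comp H))) z := by
    rw [edz]
    exact ((key 1).sub ((key Complex.I).const_mul Complex.I)).const_mul _
  have h2 : HasFDerivAt (dZbar f)
      ((2:ℂ)⁻¹ • (((ContinuousLinearMap.apply ℝ ℂ 1).comp H) +
        Complex.I • ((ContinuousLinearMap.apply ℝ ℂ Complex.I).comp H))) z := by
    rw [edzb]
    exact ((key 1).add ((key Complex.I).const_mul Complex.I)).const_mul _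
  show (fderiv ℝ (dZ f) z 1 + Complex.I * fderiv ℝ (dZ f) z Complex.I)/2 =
    (fderiv ℝ (dZbar f) z 1 - Complex.I * fderiv ℝ (dZbar f) z Complex.I)/2
  rw [h1.fderiv, h2.fderiv]
  simp only [ContinuousLinearMap.smul_apply, ContinuousLinearMap.sub_apply,
    ContinuousLinearMap.add_apply, ContinuousLinearMap.comp_apply,
    ContinuousLinearMap.apply_apply, smul_eq_mul]
  have hs := hsymm 1 Complex.I
  rw [← hH] at hs
  rw [hs]
  ring

theorem contDiffAt_dZ {f : ℂ → ℂ} {z : ℂ} {n : ℕ} (hf : ContDiffAt ℝ (n+1 : ℕ) f z) :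
    ContDiffAt ℝ n (dZ f) z := by
  have hD : ContDiffAt ℝ n (fderiv ℝ f) z := hf.fderiv_right (by exact_mod_cast le_rfl)
  have h1 : ContDiffAt ℝ n (fun w => fderiv ℝ f w 1) z := hD.clm_apply contDiffAt_const
  have hI : ContDiffAt ℝ n (fun w => fderiv ℝ f w Complex.I) z := hD.clm_apply contDiffAt_const
  exact (h1.sub (contDiffAt_const.mul hI)).div_const (2:ℂ)
theorem contDiffAt_dZbar {f : ℂ → ℂ} {z : ℂ} {n : ℕ} (hf : ContDiffAt ℝ (n+1 : ℕ) f z) :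
    ContDiffAt ℝ n (dZbar f) z := by
  have hD : ContDiffAt ℝ n (fderiv ℝ f) z := hf.fderiv_right (by exact_mod_cast le_rfl)
  have h1 : ContDiffAt ℝ n (fun w => fderiv ℝ f w 1) z := hD.clm_apply contDiffAt_const
  have hI : ContDiffAt ℝ n (fun w => fderiv ℝ f w Complex.I) z := hD.clm_apply contDiffAt_const
  exact (h1.add (contDiffAt_const.mul hI)).div_const (2:ℂ)

/-- the two expressions `4 L_{r+1} K_r + r(r+1)` and `4 K_{r-1} L_r + r(r-1)`
define the same operator `D_r` on smooth sections, for a curvature `-1` conformal metric. -/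
theorem laplacian_two_expressions
    (U : Set ℂ) (hU : IsOpen U)
    (lam : ℂ → ℝ) (hlam : ContDiffOn ℝ (⊤ : ℕ∞) lam U) (hpos : ∀ z ∈ U, 0 < lam z)
    (hcurv : CurvMinusOne lam U)
    (r : ℤ) (f : ℂ → ℂ) (hf : ContDiffOn ℝ (⊤ : ℕ∞) f U) :
    ∀ z ∈ U,
      4 * Lop lam (r + 1) (Kop lam r f) z + ((r * (r + 1) : ℤ) : ℂ) * f z =
        4 * Kop lam (r - 1) (Lop lam r f) z + ((r * (r - 1) : ℤ) : ℂ) * f z := by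
  intro z hz
  set g : ℂ → ℂ := fun u => (Real.log (lam u) : ℂ) with hgdef
  -- smoothness
  have hCg : ∀ w ∈ U, ContDiffAt ℝ ((3:ℕ) : WithTop ℕ∞) g w := by
    intro w hw
    have h1 : ContDiffAt ℝ ((3:ℕ) : WithTop ℕ∞) lam w :=
      (hlam.contDiffAt (hU.mem_nhds hw)).of_le (WithTop.coe_le_coe.mpr le_top)
    have h2 : ContDiffAt ℝ ((3:ℕ) : WithTop ℕ∞) Real.log (lam w) :=
      Real.contDiffAt_log.mpr (ne_of_gt (hpos w hw))
    have h3 : ContDiffAt ℝ ((3:ℕ) : WithTop ℕ∞) (fun u => Real.log (lam u)) w := h2.comp w h1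
    exact (Complex.ofRealCLM.contDiff.contDiffAt).comp w h3
  have hCf : ∀ w ∈ U, ContDiffAt ℝ ((3:ℕ) : WithTop ℕ∞) f w :=
    fun w hw => (hf.contDiffAt (hU.mem_nhds hw)).of_le (WithTop.coe_le_coe.mpr le_top)
  -- differentiability
  have hdg : ∀ w ∈ U, DifferentiableAt ℝ g w :=
    fun w hw => (hCg w hw).differentiableAt (by norm_num)
  have hdf : ∀ w ∈ U, DifferentiableAt ℝ f w :=
    fun w hw => (hCf w hw).differentiableAt (by norm_num)
  have hdp : ∀ w ∈ U, DifferentiableAt ℝ (dZ g) w := fun w hw =>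
    (contDiffAt_dZ (n := 2) (hCg w hw)).differentiableAt (by norm_num)
  have hdq : ∀ w ∈ U, DifferentiableAt ℝ (dZbar g) w := fun w hw =>
    (contDiffAt_dZbar (n := 2) (hCg w hw)).differentiableAt (by norm_num)
  have hdZf : ∀ w ∈ U, DifferentiableAt ℝ (dZ f) w := fun w hw =>
    (contDiffAt_dZ (n := 2) (hCf w hw)).differentiableAt (by norm_num)
  have hdZbarf : ∀ w ∈ U, DifferentiableAt ℝ (dZbar f) w := fun w hw =>
    (contDiffAt_dZbar (n := 2) (hCf w hw)).differentiableAt (by norm_num)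
  have hdexp : ∀ (c : ℂ), ∀ w ∈ U, DifferentiableAt ℝ (fun u => Complex.exp (c * g u)) w :=
    fun c w hw => by
      have h1 : DifferentiableAt ℝ Complex.exp (c * g w) :=
        DifferentiableAt.restrictScalars (𝕜' := ℂ) ℝ (Complex.differentiable_exp (c * g w))
      exact h1.comp w ((hdg w hw).const_mul c)
  -- lam = exp g
  have hLexp : ∀ w ∈ U, (lam w : ℂ) = Complex.exp (g w) := by
    intro w hw
    rw [hgdef, ← Complex.ofReal_exp, Real.exp_log (hpos w hw)]
  have hA : ∀ w : ℂ, Complex.exp (g w) ≠ 0 := fun w => Complex.exp_ne_zero _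
  -- Kop in exp form
  have Kop_eq : ∀ w ∈ U, Kop lam r f w =
      (Complex.exp (g w))⁻¹ * (dZ f w - (r : ℂ) * (dZ g w * f w)) := by
    intro w hw
    have hcong : (fun u => (lam u : ℂ) ^ (-r) * f u) =ᶠ[nhds w]
        (fun u => Complex.exp (-(r:ℂ) * g u) * f u) := by
      filter_upwards [hU.mem_nhds hw] with u hu
      rw [hLexp u hu, ← Complex.exp_int_mul]
      congr 2
      push_cast
      ring
    have h2 : Complex.exp (-(r:ℂ) * g w) = Complex.exp (g w) ^ (-r) := by
      rw [← Complex.exp_int_mul]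
      congr 1
      push_cast
      ring
    unfold Kop
    rw [dZ_congr hcong,
      dZ_mul (hdexp (-(r:ℂ)) w hw) (hdf w hw),
      dZ_exp (h := fun u => -(r:ℂ) * g u) ((hdg w hw).const_mul (-(r:ℂ))),
      dZ_const_mul (-(r:ℂ)) (hdg w hw), hLexp w hw, h2]
    have e1 : Complex.exp (g w) ^ (r-1) * Complex.exp (g w) ^ (-r) = (Complex.exp (g w))⁻¹ := by
      rw [← zpow_add₀ (hA w), show r - 1 + -r = -1 by ring, zpow_neg_one]
    calc Complex.exp (g w) ^ (r-1) *
          (Complex.exp (g w) ^ (-r) * (-(r:ℂ) * dZ g w) * f w + Complex.exp (g w) ^ (-r) * dZ f w)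
        = (Complex.exp (g w) ^ (r-1) * Complex.exp (g w) ^ (-r)) *
            (dZ f w - (r:ℂ) * (dZ g w * f w)) := by ring
      _ = (Complex.exp (g w))⁻¹ * (dZ f w - (r:ℂ) * (dZ g w * f w)) := by rw [e1]
  -- Lop in exp form
  have Lop_eq : ∀ w ∈ U, Lop lam r f w =
      (Complex.exp (g w))⁻¹ * (dZbar f w + (r : ℂ) * (dZbar g w * f w)) := by
    intro w hw
    have hcong : (fun u => (lam u : ℂ) ^ r * f u) =ᶠ[nhds w]
        (fun u => Complex.exp ((r:ℂ) * g u) * f u) := by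
      filter_upwards [hU.mem_nhds hw] with u hu
      rw [hLexp u hu, ← Complex.exp_int_mul]
    have h2 : Complex.exp ((r:ℂ) * g w) = Complex.exp (g w) ^ r := by
      rw [← Complex.exp_int_mul]
    unfold Lop
    rw [dZbar_congr hcong,
      dZbar_mul (hdexp ((r:ℂ)) w hw) (hdf w hw),
      dZbar_exp (h := fun u => (r:ℂ) * g u) ((hdg w hw).const_mul ((r:ℂ))),
      dZbar_const_mul ((r:ℂ)) (hdg w hw), hLexp w hw, h2]
    have e1 : Complex.exp (g w) ^ (-r-1) * Complex.exp (g w) ^ r = (Complex.exp (g w))⁻¹ := by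
      rw [← zpow_add₀ (hA w), show -r - 1 + r = -1 by ring, zpow_neg_one]
    calc Complex.exp (g w) ^ (-r-1) *
          (Complex.exp (g w) ^ r * ((r:ℂ) * dZbar g w) * f w + Complex.exp (g w) ^ r * dZbar f w)
        = (Complex.exp (g w) ^ (-r-1) * Complex.exp (g w) ^ r) *
            (dZbar f w + (r:ℂ) * (dZbar g w * f w)) := by ring
      _ = (Complex.exp (g w))⁻¹ * (dZbar f w + (r:ℂ) * (dZbar g w * f w)) := by rw [e1]
  -- key identities on U
  have key1 : ∀ w ∈ U, (lam w : ℂ) ^ (r+1) * Kop lam r f w =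
      Complex.exp ((r:ℂ) * g w) * (dZ f w - (r:ℂ) * (dZ g w * f w)) := by
    intro w hw
    rw [Kop_eq w hw, hLexp w hw, Complex.exp_int_mul (g w) r]
    have e1 : Complex.exp (g w) ^ (r+1) * (Complex.exp (g w))⁻¹ = Complex.exp (g w) ^ r := by
      rw [← zpow_neg_one, ← zpow_add₀ (hA w), show r + 1 + -1 = r by ring]
    calc Complex.exp (g w) ^ (r+1) * ((Complex.exp (g w))⁻¹ * (dZ f w - (r:ℂ) * (dZ g w * f w)))
        = (Complex.exp (g w) ^ (r+1) * (Complex.exp (g w))⁻¹) *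
            (dZ f w - (r:ℂ) * (dZ g w * f w)) := by ring
      _ = _ := by rw [e1]
  have key2 : ∀ w ∈ U, (lam w : ℂ) ^ (-(r-1)) * Lop lam r f w =
      Complex.exp (-(r:ℂ) * g w) * (dZbar f w + (r:ℂ) * (dZbar g w * f w)) := by
    intro w hw
    have h2 : Complex.exp (-(r:ℂ) * g w) = Complex.exp (g w) ^ (-r) := by
      rw [← Complex.exp_int_mul]
      congr 1
      push_cast
      ring
    rw [Lop_eq w hw, hLexp w hw, h2]
    have e1 : Complex.exp (g w) ^ (-(r-1)) * (Complex.exp (g w))⁻¹ = Complex.exp (g w) ^ (-r) := by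
      rw [← zpow_neg_one, ← zpow_add₀ (hA w), show -(r-1) + -1 = -r by ring]
    calc Complex.exp (g w) ^ (-(r-1)) *
          ((Complex.exp (g w))⁻¹ * (dZbar f w + (r:ℂ) * (dZbar g w * f w)))
        = (Complex.exp (g w) ^ (-(r-1)) * (Complex.exp (g w))⁻¹) *
            (dZbar f w + (r:ℂ) * (dZbar g w * f w)) := by ring
      _ = _ := by rw [e1]
  -- second derivatives
  have hstep : dZbar (fun w => (lam w : ℂ) ^ (r+1) * Kop lam r f w) z =
      Complex.exp (g z) ^ r * ((r:ℂ) * dZbar g z * (dZ f z - (r:ℂ) * (dZ g z * f z))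
        + (dZbar (dZ f) z - (r:ℂ) * (dZbar (dZ g) z * f z + dZ g z * dZbar f z))) := by
    have hev : (fun w => (lam w : ℂ) ^ (r+1) * Kop lam r f w) =ᶠ[nhds z]
        (fun w => Complex.exp ((r:ℂ) * g w) * (dZ f w - (r:ℂ) * (dZ g w * f w))) := by
      filter_upwards [hU.mem_nhds hz] with u hu
      exact key1 u hu
    have hSd : DifferentiableAt ℝ (fun u => dZ f u - (r:ℂ) * (dZ g u * f u)) z :=
      (hdZf z hz).sub (((hdp z hz).mul (hdf z hz)).const_mul _)
    rw [dZbar_congr hev,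
      dZbar_mul (hdexp ((r:ℂ)) z hz) hSd,
      dZbar_exp (h := fun u => (r:ℂ) * g u) ((hdg z hz).const_mul _),
      dZbar_const_mul _ (hdg z hz),
      dZbar_sub (g := fun u => (r:ℂ) * (dZ g u * f u)) (hdZf z hz) (((hdp z hz).mul (hdf z hz)).const_mul _),
      dZbar_const_mul (f := fun u => dZ g u * f u) _ ((hdp z hz).mul (hdf z hz)),
      dZbar_mul (hdp z hz) (hdf z hz),
      Complex.exp_int_mul (g z) r]
    ring
  have hstep2 : dZ (fun w => (lam w : ℂ) ^ (-(r-1)) * Lop lam r f w) z =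
      Complex.exp (g z) ^ (-r) * (-(r:ℂ) * dZ g z * (dZbar f z + (r:ℂ) * (dZbar g z * f z))
        + (dZ (dZbar f) z + (r:ℂ) * (dZ (dZbar g) z * f z + dZbar g z * dZ f z))) := by
    have hev : (fun w => (lam w : ℂ) ^ (-(r-1)) * Lop lam r f w) =ᶠ[nhds z]
        (fun w => Complex.exp (-(r:ℂ) * g w) * (dZbar f w + (r:ℂ) * (dZbar g w * f w))) := by
      filter_upwards [hU.mem_nhds hz] with u hu
      exact key2 u hu
    have hTd : DifferentiableAt ℝ (fun u => dZbar f u + (r:ℂ) * (dZbar g u * f u)) z :=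
      (hdZbarf z hz).add (((hdq z hz).mul (hdf z hz)).const_mul _)
    have h2 : Complex.exp (-(r:ℂ) * g z) = Complex.exp (g z) ^ (-r) := by
      rw [← Complex.exp_int_mul]
      congr 1
      push_cast
      ring
    rw [dZ_congr hev,
      dZ_mul (hdexp (-(r:ℂ)) z hz) hTd,
      dZ_exp (h := fun u => -(r:ℂ) * g u) ((hdg z hz).const_mul _),
      dZ_const_mul _ (hdg z hz),
      dZ_add (g := fun u => (r:ℂ) * (dZbar g u * f u)) (hdZbarf z hz) (((hdq z hz).mul (hdf z hz)).const_mul _),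
      dZ_const_mul (f := fun u => dZbar g u * f u) _ ((hdq z hz).mul (hdf z hz)),
      dZ_mul (hdq z hz) (hdf z hz),
      h2]
    ring
  -- values of the two operators at z
  have hL4 : Lop lam (r+1) (Kop lam r f) z =
      Complex.exp (g z) ^ (-2:ℤ) * ((r:ℂ) * dZbar g z * (dZ f z - (r:ℂ) * (dZ g z * f z))
        + (dZbar (dZ f) z - (r:ℂ) * (dZbar (dZ g) z * f z + dZ g z * dZbar f z))) := by
    show (lam z : ℂ) ^ (-(r+1) - 1) * dZbar (fun w => (lam w : ℂ) ^ (r+1) * Kop lam r f w) z = _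
    rw [hstep, hLexp z hz]
    have e1 : Complex.exp (g z) ^ (-(r+1)-1) * Complex.exp (g z) ^ r
        = Complex.exp (g z) ^ (-2:ℤ) := by
      rw [← zpow_add₀ (hA z), show -(r+1)-1 + r = -2 by ring]
    calc Complex.exp (g z) ^ (-(r+1)-1) * (Complex.exp (g z) ^ r *
          ((r:ℂ) * dZbar g z * (dZ f z - (r:ℂ) * (dZ g z * f z))
            + (dZbar (dZ f) z - (r:ℂ) * (dZbar (dZ g) z * f z + dZ g z * dZbar f z))))
        = (Complex.exp (g z) ^ (-(r+1)-1) * Complex.exp (g z) ^ r) *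
          ((r:ℂ) * dZbar g z * (dZ f z - (r:ℂ) * (dZ g z * f z))
            + (dZbar (dZ f) z - (r:ℂ) * (dZbar (dZ g) z * f z + dZ g z * dZbar f z))) := by ring
      _ = _ := by rw [e1]
  have hK4 : Kop lam (r-1) (Lop lam r f) z =
      Complex.exp (g z) ^ (-2:ℤ) * (-(r:ℂ) * dZ g z * (dZbar f z + (r:ℂ) * (dZbar g z * f z))
        + (dZ (dZbar f) z + (r:ℂ) * (dZ (dZbar g) z * f z + dZbar g z * dZ f z))) := by
    show (lam z : ℂ) ^ (r - 1 - 1) * dZ (fun w => (lam w : ℂ) ^ (-(r-1)) * Lop lam r f w) z = _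
    rw [hstep2, hLexp z hz]
    have e1 : Complex.exp (g z) ^ (r-1-1) * Complex.exp (g z) ^ (-r)
        = Complex.exp (g z) ^ (-2:ℤ) := by
      rw [← zpow_add₀ (hA z), show r-1-1 + -r = -2 by ring]
    calc Complex.exp (g z) ^ (r-1-1) * (Complex.exp (g z) ^ (-r) *
          (-(r:ℂ) * dZ g z * (dZbar f z + (r:ℂ) * (dZbar g z * f z))
            + (dZ (dZbar f) z + (r:ℂ) * (dZ (dZbar g) z * f z + dZbar g z * dZ f z))))
        = (Complex.exp (g z) ^ (r-1-1) * Complex.exp (g z) ^ (-r)) *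
          (-(r:ℂ) * dZ g z * (dZbar f z + (r:ℂ) * (dZbar g z * f z))
            + (dZ (dZbar f) z + (r:ℂ) * (dZ (dZbar g) z * f z + dZbar g z * dZ f z))) := by ring
      _ = _ := by rw [e1]
  -- symmetry of second derivatives and curvature
  have hsymf : dZbar (dZ f) z = dZ (dZbar f) z :=
    dZbar_dZ_comm ((hCf z hz).of_le (by exact_mod_cast (by norm_num : (2:ℕ) ≤ 3)))
  have hsymg : dZbar (dZ g) z = dZ (dZbar g) z :=
    dZbar_dZ_comm ((hCg z hz).of_le (by exact_mod_cast (by norm_num : (2:ℕ) ≤ 3)))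
  have hc : 4 * dZ (dZbar g) z = Complex.exp (g z) * Complex.exp (g z) := by
    have h0 := hcurv z hz
    rw [hLexp z hz, pow_two] at h0
    exact h0
  have hqv : dZ (dZbar g) z = Complex.exp (g z) * Complex.exp (g z) / 4 := by
    linear_combination hc / 4
  have hA2 : Complex.exp (g z) ^ (-2:ℤ) = (Complex.exp (g z) * Complex.exp (g z))⁻¹ := by
    rw [zpow_neg, show ((2:ℤ)) = ((2:ℕ):ℤ) by norm_num, zpow_natCast, pow_two]
  rw [hL4, hK4, hA2, hsymf, hsymg, hqv]
  have hAz := hA z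
  push_cast
  field_simp
  ring
end

section
/- Let $\phi$ be a smooth compactly supported section of type $S(-1)$ with respect to a curvature $-1$ conformal metric. Then $4\langle\phi,\phi\rangle \le \langle (D_{-1}-2)\phi, (D_{-1}-2)\phi\rangle$, where $D_{-1} = 4L_0K_{-1}$. In particular the operator $D_{-1}-2$ is injective on smooth compactly supported sections. -/
open Complex MeasureTheory

/-! ### Auxiliary lemmas -/

lemma aux_integral_fderiv_real (g : ℂ → ℝ) (hg : ContDiff ℝ (⊤ : ℕ∞) g)
    (hs : HasCompactSupport g) (v : ℂ) : ∫ z, fderiv ℝ g z v = 0 := by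
  have hd : Differentiable ℝ g := hg.differentiable (by simp)
  obtain ⟨C, hC⟩ := (hg.continuous_fderiv (by simp)).norm.bounded_above_of_compact_support
    ((hs.fderiv ℝ).norm)
  have hlip : LipschitzWith C.toNNReal g := by
    apply lipschitzWith_of_nnnorm_fderiv_le hd
    intro x
    rw [← NNReal.coe_le_coe, coe_nnnorm, Real.coe_toNNReal']
    exact le_max_of_le_left (by simpa using hC x)
  have key := LipschitzWith.integral_lineDeriv_mul_eq (μ := volume)
    (LipschitzWith.const (b := (1:ℝ))) hlip hs (-v)
  have h1 : ∀ x : ℂ, lineDeriv ℝ (fun _ : ℂ => (1:ℝ)) x (-v) = 0 := fun x => by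
    simpa using (differentiableAt_const (1:ℝ)).lineDeriv_eq_fderiv (v := -v)
  have h2 : ∀ x : ℂ, lineDeriv ℝ g x (- -v) = fderiv ℝ g x v := fun x => by
    rw [neg_neg, (hd x).lineDeriv_eq_fderiv]
  simp only [h1, h2, zero_mul, mul_one, integral_zero] at key
  exact key.symm

lemma aux_fderiv_integrable (F : ℂ → ℂ) (hF : ContDiff ℝ (⊤ : ℕ∞) F)
    (hs : HasCompactSupport F) (v : ℂ) : Integrable (fun z => fderiv ℝ F z v) := by
  apply Continuous.integrable_of_hasCompactSupport
  · exact ((ContinuousLinearMap.apply ℝ ℂ v).continuous).comp (hF.continuous_fderiv (by simp))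
  · exact (hs.fderiv ℝ).comp_left (g := fun L : ℂ →L[ℝ] ℂ => L v) rfl

lemma aux_integral_fderiv_complex (F : ℂ → ℂ) (hF : ContDiff ℝ (⊤ : ℕ∞) F)
    (hs : HasCompactSupport F) (v : ℂ) : ∫ z, fderiv ℝ F z v = 0 := by
  have hd := hF.differentiable (by simp)
  have hre : ∀ z, fderiv ℝ (fun w => (F w).re) z v = (fderiv ℝ F z v).re := by
    intro z
    have h : (fun w => (F w).re) = (Complex.reCLM : ℂ →L[ℝ] ℝ) ∘ F := rfl
    rw [h, fderiv_comp z (Complex.reCLM.differentiableAt) (hd z), ContinuousLinearMap.fderiv]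
    rfl
  have him : ∀ z, fderiv ℝ (fun w => (F w).im) z v = (fderiv ℝ F z v).im := by
    intro z
    have h : (fun w => (F w).im) = (Complex.imCLM : ℂ →L[ℝ] ℝ) ∘ F := rfl
    rw [h, fderiv_comp z (Complex.imCLM.differentiableAt) (hd z), ContinuousLinearMap.fderiv]
    rfl
  have h1 : ∫ z, fderiv ℝ (fun w => (F w).re) z v = 0 :=
    aux_integral_fderiv_real _ (Complex.reCLM.contDiff.comp hF)
      (hs.comp_left (g := Complex.re) rfl) v
  have h2 : ∫ z, fderiv ℝ (fun w => (F w).im) z v = 0 :=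
    aux_integral_fderiv_real _ (Complex.imCLM.contDiff.comp hF)
      (hs.comp_left (g := Complex.im) rfl) v
  have hint := aux_fderiv_integrable F hF hs v
  apply Complex.ext
  · have := integral_re hint (𝕜 := ℂ)
    simp only [RCLike.re_to_complex] at this
    rw [← this]
    simp only [Complex.zero_re]
    rw [← h1]; exact integral_congr_ae (Filter.Eventually.of_forall fun z => (hre z).symm)
  · have := integral_im hint (𝕜 := ℂ)
    simp only [RCLike.im_to_complex] at this
    rw [← this]
    simp only [Complex.zero_im]
    rw [← h2]; exact integral_congr_ae (Filter.Eventually.of_forall fun z => (him z).symm)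

lemma aux_integral_dZbar (F : ℂ → ℂ) (hF : ContDiff ℝ (⊤ : ℕ∞) F)
    (hs : HasCompactSupport F) : ∫ z, dZbar F z = 0 := by
  simp only [dZbar]
  rw [integral_div, integral_add (aux_fderiv_integrable F hF hs 1)
    ((aux_fderiv_integrable F hF hs I).const_mul I), integral_const_mul,
    aux_integral_fderiv_complex F hF hs 1, aux_integral_fderiv_complex F hF hs I]
  simp

lemma aux_dZbar_mul (f g : ℂ → ℂ) (z : ℂ) (hf : DifferentiableAt ℝ f z)
    (hg : DifferentiableAt ℝ g z) :
    dZbar (fun w => f w * g w) z = dZbar f z * g z + f z * dZbar g z := by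
  simp only [dZbar, fderiv_fun_mul hf hg]
  simp only [ContinuousLinearMap.add_apply, ContinuousLinearMap.smul_apply, smul_eq_mul]
  ring

lemma aux_dZbar_conj (f : ℂ → ℂ) (z : ℂ) :
    dZbar (fun w => (starRingEnd ℂ) (f w)) z = (starRingEnd ℂ) (dZ f z) := by
  simp only [dZbar, dZ]
  have h : fderiv ℝ (fun w => (starRingEnd ℂ) (f w)) z
      = ((starL' ℝ : ℂ ≃L[ℝ] ℂ) : ℂ →L[ℝ] ℂ) ∘L fderiv ℝ f z := fderiv_star
  rw [h]
  simp only [ContinuousLinearMap.coe_comp', Function.comp_apply,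
    ContinuousLinearEquiv.coe_coe, starL'_apply]
  rw [map_div₀, map_sub, map_mul]
  simp only [Complex.conj_I, map_ofNat, ← starRingEnd_apply]
  ring

/-- `dZ` of a function vanishing on an open set vanishes there. -/
lemma aux_dZ_zero (f : ℂ → ℂ) (W : Set ℂ) (hW : IsOpen W) (h0 : ∀ w ∈ W, f w = 0)
    {z : ℂ} (hz : z ∈ W) : dZ f z = 0 := by
  have h : fderiv ℝ f z = fderiv ℝ (fun _ : ℂ => (0:ℂ)) z :=
    Filter.EventuallyEq.fderiv_eq
      (Filter.eventually_of_mem (hW.mem_nhds hz) fun w hw => h0 w hw)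
  simp [dZ, h]

lemma aux_dZbar_zero (f : ℂ → ℂ) (W : Set ℂ) (hW : IsOpen W) (h0 : ∀ w ∈ W, f w = 0)
    {z : ℂ} (hz : z ∈ W) : dZbar f z = 0 := by
  have h : fderiv ℝ f z = fderiv ℝ (fun _ : ℂ => (0:ℂ)) z :=
    Filter.EventuallyEq.fderiv_eq
      (Filter.eventually_of_mem (hW.mem_nhds hz) fun w hw => h0 w hw)
  simp [dZbar, h]

/-- Smoothness of `dZ` on an open set. -/
lemma aux_contDiffOn_dZ (f : ℂ → ℂ) (U : Set ℂ) (hU : IsOpen U)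
    (hf : ContDiffOn ℝ (⊤ : ℕ∞) f U) : ContDiffOn ℝ (⊤ : ℕ∞) (dZ f) U := by
  have h : ContDiffOn ℝ (⊤ : ℕ∞) (fderiv ℝ f) U :=
    hf.fderiv_of_isOpen hU (by exact_mod_cast le_top)
  have h1 : ∀ v : ℂ, ContDiffOn ℝ (⊤ : ℕ∞) (fun z => fderiv ℝ f z v) U := fun v =>
    (ContinuousLinearMap.apply ℝ ℂ v).contDiff.comp_contDiffOn h
  exact (((h1 1).sub ((contDiffOn_const).mul (h1 I))).div_const 2)

lemma aux_contDiffOn_dZbar (f : ℂ → ℂ) (U : Set ℂ) (hU : IsOpen U)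
    (hf : ContDiffOn ℝ (⊤ : ℕ∞) f U) : ContDiffOn ℝ (⊤ : ℕ∞) (dZbar f) U := by
  have h : ContDiffOn ℝ (⊤ : ℕ∞) (fderiv ℝ f) U :=
    hf.fderiv_of_isOpen hU (by exact_mod_cast le_top)
  have h1 : ∀ v : ℂ, ContDiffOn ℝ (⊤ : ℕ∞) (fun z => fderiv ℝ f z v) U := fun v =>
    (ContinuousLinearMap.apply ℝ ℂ v).contDiff.comp_contDiffOn h
  exact (((h1 1).add ((contDiffOn_const).mul (h1 I))).div_const 2)

/-- `4⟨φ,φ⟩ ≤ ⟨(D_{-1}-2)φ,(D_{-1}-2)φ⟩` for smooth compactly supported `φ`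
of type `S(-1)`, where `D_{-1} = 4 L_0 K_{-1}`; in particular `D_{-1}-2` is injective on
such sections. -/
theorem coercivity_Dm1
    (U : Set ℂ) (hU : IsOpen U)
    (lam : ℂ → ℝ) (hlam : ContDiffOn ℝ (⊤ : ℕ∞) lam U) (hpos : ∀ z ∈ U, 0 < lam z)
    (hcurv : CurvMinusOne lam U)
    (φ : ℂ → ℂ) (hφ : ContDiffOn ℝ (⊤ : ℕ∞) φ U)
    (hsupp : HasCompactSupport φ) (hsub : tsupport φ ⊆ U) :
    (4 * ∫ z in U, ‖φ z‖ ^ 2 * (lam z) ^ 2 ≤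
      ∫ z in U, ‖4 * Lop lam 0 (Kop lam (-1) φ) z - 2 * φ z‖ ^ 2 * (lam z) ^ 2) ∧
    ((∀ z ∈ U, 4 * Lop lam 0 (Kop lam (-1) φ) z - 2 * φ z = 0) → ∀ z ∈ U, φ z = 0) := by
  clear hcurv
  have hφ' : ContDiffOn ℝ (⊤:ℕ∞) φ U := hφ.of_le (by simp)
  have hlam' : ContDiffOn ℝ (⊤:ℕ∞) lam U := hlam.of_le (by simp)
  set V : Set ℂ := (tsupport φ)ᶜ with hVdef
  have hV : IsOpen V := (isClosed_tsupport φ).isOpen_compl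
  have hUV : ∀ z : ℂ, z ∈ U ∨ z ∈ V := by
    intro z
    by_cases h : z ∈ tsupport φ
    · exact Or.inl (hsub h)
    · exact Or.inr h
  have hnotU : ∀ z : ℂ, z ∉ U → z ∈ V := fun z hz => (hUV z).resolve_left hz
  have hφV : ∀ z ∈ V, φ z = 0 := fun z hz => image_eq_zero_of_notMem_tsupport hz
  set lamC : ℂ → ℂ := fun z => (lam z : ℂ) with hlamCdef
  have hlamCU : ContDiffOn ℝ (⊤:ℕ∞) lamC U := Complex.ofRealCLM.contDiff.comp_contDiffOn hlam'
  have hlamne : ∀ z ∈ U, lamC z ≠ 0 := fun z hz => by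
    simp only [hlamCdef, Complex.ofReal_ne_zero]
    exact (hpos z hz).ne'
  set p : ℂ → ℂ := fun z => lamC z * φ z with hpdef
  have hpU : ContDiffOn ℝ (⊤:ℕ∞) p U := hlamCU.mul hφ'
  have hpV : ∀ z ∈ V, p z = 0 := fun z hz => by simp [hpdef, hφV z hz]
  set ψ : ℂ → ℂ := dZ p with hψdef
  have hψU : ContDiffOn ℝ (⊤:ℕ∞) ψ U := aux_contDiffOn_dZ p U hU hpU
  have hψV : ∀ z ∈ V, ψ z = 0 := fun z hz => aux_dZ_zero p V hV hpV hz
  set K' : ℂ → ℂ := fun z => ((lamC z)^2)⁻¹ * ψ z with hK'def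
  have hK : Kop lam (-1) φ = K' := by
    funext z
    have h1 : (fun w => ((lam w : ℂ)) ^ (-(-1:ℤ)) * φ w) = p := by
      funext w
      simp [hpdef, hlamCdef]
    rw [Kop, h1]
    have h2 : ((-1:ℤ) - 1) = -2 := by norm_num
    rw [h2, zpow_neg]
    simp only [hK'def, hψdef, hlamCdef]
    norm_num [zpow_two, pow_two]
  have hK'U : ContDiffOn ℝ (⊤:ℕ∞) K' U :=
    ((hlamCU.pow 2).inv (fun z hz => pow_ne_zero 2 (hlamne z hz))).mul hψU
  have hK'V : ∀ z ∈ V, K' z = 0 := fun z hz => by simp [hK'def, hψV z hz]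
  set A' : ℂ → ℂ := fun z => (lamC z)⁻¹ * dZbar K' z with hA'def
  have hA : Lop lam 0 (Kop lam (-1) φ) = A' := by
    funext z
    have h1 : (fun w => ((lam w : ℂ)) ^ (0:ℤ) * Kop lam (-1) φ w) = K' := by
      funext w
      rw [zpow_zero, one_mul, hK]
    have h2 : (-(0:ℤ) - 1) = -1 := by norm_num
    rw [Lop, h1, h2, zpow_neg_one]
  have hdZbarK'U : ContDiffOn ℝ (⊤:ℕ∞) (dZbar K') U := aux_contDiffOn_dZbar K' U hU hK'U
  have hA'U : ContDiffOn ℝ (⊤:ℕ∞) A' U := (hlamCU.inv hlamne).mul hdZbarK'U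
  have hA'V : ∀ z ∈ V, A' z = 0 := fun z hz => by
    show (lamC z)⁻¹ * dZbar K' z = 0
    rw [aux_dZbar_zero K' V hV hK'V hz, mul_zero]
  -- the auxiliary global function G and its ∂̄
  set G : ℂ → ℂ := fun z => K' z * (starRingEnd ℂ) (p z) with hGdef
  have hconjpU : ContDiffOn ℝ (⊤:ℕ∞) (fun z => (starRingEnd ℂ) (p z)) U := by
    have h := ((starL' ℝ : ℂ ≃L[ℝ] ℂ) : ℂ →L[ℝ] ℂ).contDiff.comp_contDiffOn hpU
    exact h.congr fun z _ => rfl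
  have hGU : ContDiffOn ℝ (⊤:ℕ∞) G U := hK'U.mul hconjpU
  have hGV : ∀ z ∈ V, G z = 0 := fun z hz => by simp [hGdef, hpV z hz]
  have hG : ContDiff ℝ (⊤:ℕ∞) G := by
    rw [contDiff_iff_contDiffAt]
    intro z
    rcases hUV z with hz | hz
    · exact hGU.contDiffAt (hU.mem_nhds hz)
    · exact ContDiffAt.congr_of_eventuallyEq (contDiffAt_const (c := 0))
        (Filter.eventually_of_mem (hV.mem_nhds hz) fun w hw => hGV w hw)
  have hGsupp : HasCompactSupport G :=
    HasCompactSupport.intro hsupp fun x hx => hGV x hx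
  have hder : ∀ z, dZbar G z
      = lamC z * A' z * (starRingEnd ℂ) (p z) + K' z * (starRingEnd ℂ) (ψ z) := by
    intro z
    rcases hUV z with hz | hz
    · have hdK' : DifferentiableAt ℝ K' z :=
        (hK'U.contDiffAt (hU.mem_nhds hz)).differentiableAt (by simp)
      have hdp : DifferentiableAt ℝ p z :=
        (hpU.contDiffAt (hU.mem_nhds hz)).differentiableAt (by simp)
      have hdconjp : DifferentiableAt ℝ (fun w => (starRingEnd ℂ) (p w)) z :=
        (hconjpU.contDiffAt (hU.mem_nhds hz)).differentiableAt (by simp)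
      have h1 : dZbar G z = dZbar K' z * (starRingEnd ℂ) (p z)
          + K' z * dZbar (fun w => (starRingEnd ℂ) (p w)) z :=
        aux_dZbar_mul K' (fun w => (starRingEnd ℂ) (p w)) z hdK' hdconjp
      rw [h1, aux_dZbar_conj p z]
      have h2 : dZbar K' z = lamC z * A' z := by
        simp only [hA'def]
        rw [← mul_assoc, mul_inv_cancel₀ (hlamne z hz), one_mul]
      rw [h2, hψdef]
    · have h1 : dZbar G z = 0 := aux_dZbar_zero G V hV hGV hz
      rw [h1, hpV z hz, hψV z hz]
      simp
  -- integral identity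
  have hintdZbar : ∫ z, dZbar G z = 0 := aux_integral_dZbar G hG hGsupp
  have hintH : ∫ z, (lamC z * A' z * (starRingEnd ℂ) (p z)
      + K' z * (starRingEnd ℂ) (ψ z)) = 0 := by
    rw [← integral_congr_ae (Filter.Eventually.of_forall hder)]
    exact hintdZbar
  -- continuity gluing
  have hsupports : ∀ (f : ℂ → ℂ), (∀ z ∈ V, f z = 0) → HasCompactSupport f := fun f hf =>
    HasCompactSupport.intro hsupp fun x hx => hf x hx

  have hglueC : ∀ (f : ℂ → ℂ), ContinuousOn f U → (∀ z ∈ V, f z = 0) → Continuous f := by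
    intro f hfU hfV
    rw [continuous_iff_continuousAt]
    intro z
    rcases hUV z with hz | hz
    · exact hfU.continuousAt (hU.mem_nhds hz)
    · have h : f =ᶠ[nhds z] (fun _ => (0:ℂ)) :=
        Filter.eventually_of_mem (hV.mem_nhds hz) fun w hw => hfV w hw
      exact continuousAt_const.congr h.symm
  have hglueR : ∀ (f : ℂ → ℝ), ContinuousOn f U → (∀ z ∈ V, f z = 0) → Continuous f := by
    intro f hfU hfV
    rw [continuous_iff_continuousAt]
    intro z
    rcases hUV z with hz | hz
    · exact hfU.continuousAt (hU.mem_nhds hz)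
    · have h : f =ᶠ[nhds z] (fun _ => (0:ℝ)) :=
        Filter.eventually_of_mem (hV.mem_nhds hz) fun w hw => hfV w hw
      exact continuousAt_const.congr h.symm
  have hconjcont : ∀ (g : ℂ → ℂ) (s : Set ℂ), ContinuousOn g s →
      ContinuousOn (fun z => (starRingEnd ℂ) (g z)) s := by
    intro g s hg
    exact Complex.continuous_conj.comp_continuousOn hg
  -- t1 and t2
  have ht1cont : Continuous (fun z => lamC z * A' z * (starRingEnd ℂ) (p z)) := by
    apply hglueC
    · exact (hlamCU.continuousOn.mul hA'U.continuousOn).mul (hconjcont p U hpU.continuousOn)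
    · intro z hz
      simp [hpV z hz]
  have ht2cont : Continuous (fun z => K' z * (starRingEnd ℂ) (ψ z)) := by
    apply hglueC
    · exact hK'U.continuousOn.mul (hconjcont ψ U hψU.continuousOn)
    · intro z hz
      simp [hψV z hz]
  have ht1int : Integrable (fun z => lamC z * A' z * (starRingEnd ℂ) (p z)) :=
    ht1cont.integrable_of_hasCompactSupport (hsupports _ (fun z hz => by simp [hpV z hz]))
  have ht2int : Integrable (fun z => K' z * (starRingEnd ℂ) (ψ z)) :=
    ht2cont.integrable_of_hasCompactSupport (hsupports _ (fun z hz => by simp [hψV z hz]))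
  have hsplit : (∫ z, lamC z * A' z * (starRingEnd ℂ) (p z))
      = - ∫ z, K' z * (starRingEnd ℂ) (ψ z) := by
    rw [integral_add ht1int ht2int] at hintH
    exact eq_neg_of_add_eq_zero_left hintH
  -- sign of the second term
  have ht2re : ∀ z, 0 ≤ (K' z * (starRingEnd ℂ) (ψ z)).re := by
    intro z
    have h : K' z * (starRingEnd ℂ) (ψ z)
        = ((((lam z)^2)⁻¹ * Complex.normSq (ψ z) : ℝ) : ℂ) := by
      simp only [hK'def]
      rw [mul_assoc, Complex.mul_conj]
      push_cast
      ring
    rw [h, Complex.ofReal_re]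
    exact mul_nonneg (inv_nonneg.2 (sq_nonneg _)) (Complex.normSq_nonneg _)
  have hret2 : 0 ≤ (∫ z, K' z * (starRingEnd ℂ) (ψ z)).re := by
    have h := integral_re ht2int (𝕜 := ℂ)
    simp only [RCLike.re_to_complex] at h
    rw [← h]
    exact integral_nonneg ht2re
  have hret1 : (∫ z, lamC z * A' z * (starRingEnd ℂ) (p z)).re ≤ 0 := by
    rw [hsplit, Complex.neg_re]
    linarith
  -- real integrands
  have hb_t1 : ∀ z, (A' z * (starRingEnd ℂ) (φ z)).re * (lam z)^2
      = (lamC z * A' z * (starRingEnd ℂ) (p z)).re := by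
    intro z
    have h : lamC z * A' z * (starRingEnd ℂ) (p z)
        = (((lam z)^2 : ℝ) : ℂ) * (A' z * (starRingEnd ℂ) (φ z)) := by
      rw [hpdef]
      simp only [map_mul, hlamCdef, Complex.conj_ofReal]
      push_cast
      ring
    rw [h, Complex.re_ofReal_mul]
    ring
  -- continuity of the real pieces
  have hacont : Continuous (fun z => ‖A' z‖^2 * (lam z)^2) := by
    apply hglueR
    · exact (hA'U.continuousOn.norm.pow 2).mul ((hlam.continuousOn).pow 2)
    · intro z hz
      simp [hA'V z hz]
  have hbcont : Continuous (fun z => (A' z * (starRingEnd ℂ) (φ z)).re * (lam z)^2) := by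
    apply hglueR
    · exact (Complex.continuous_re.comp_continuousOn
        (hA'U.continuousOn.mul (hconjcont φ U hφ'.continuousOn))).mul
        ((hlam.continuousOn).pow 2)
    · intro z hz
      simp [hφV z hz]
  have hccont : Continuous (fun z => ‖φ z‖^2 * (lam z)^2) := by
    apply hglueR
    · exact (hφ'.continuousOn.norm.pow 2).mul ((hlam.continuousOn).pow 2)
    · intro z hz
      simp [hφV z hz]
  have hsupportsR : ∀ (f : ℂ → ℝ), (∀ z ∈ V, f z = 0) → HasCompactSupport f := fun f hf =>
    HasCompactSupport.intro hsupp fun x hx => hf x hx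
  have haint : Integrable (fun z => ‖A' z‖^2 * (lam z)^2) :=
    hacont.integrable_of_hasCompactSupport (hsupportsR _ (fun z hz => by simp [hA'V z hz]))
  have hbint : Integrable (fun z => (A' z * (starRingEnd ℂ) (φ z)).re * (lam z)^2) :=
    hbcont.integrable_of_hasCompactSupport (hsupportsR _ (fun z hz => by simp [hφV z hz]))
  have hcint : Integrable (fun z => ‖φ z‖^2 * (lam z)^2) :=
    hccont.integrable_of_hasCompactSupport (hsupportsR _ (fun z hz => by simp [hφV z hz]))
  -- value of the b integral
  have hbU : (∫ z in U, (A' z * (starRingEnd ℂ) (φ z)).re * (lam z)^2) ≤ 0 := by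
    rw [setIntegral_eq_integral_of_forall_compl_eq_zero
      (fun z hz => by simp [hφV z (hnotU z hz)])]
    have h1 : (∫ z, (A' z * (starRingEnd ℂ) (φ z)).re * (lam z)^2)
        = ∫ z, (lamC z * A' z * (starRingEnd ℂ) (p z)).re :=
      integral_congr_ae (Filter.Eventually.of_forall fun z => hb_t1 z)
    have h2 := integral_re ht1int (𝕜 := ℂ)
    simp only [RCLike.re_to_complex] at h2
    rw [h1, h2]
    exact hret1
  have haU : 0 ≤ ∫ z in U, ‖A' z‖^2 * (lam z)^2 :=
    setIntegral_nonneg hU.measurableSet (fun z _ => by positivity)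
  have hcU : 0 ≤ ∫ z in U, ‖φ z‖^2 * (lam z)^2 :=
    setIntegral_nonneg hU.measurableSet (fun z _ => by positivity)
  -- pointwise expansion of the quadratic
  have hkey : ∀ u v : ℂ, ∀ t : ℝ, ‖4*u - 2*v‖^2 * t^2
      = 16*(‖u‖^2*t^2) - 16*((u * (starRingEnd ℂ) v).re * t^2) + 4*(‖v‖^2*t^2) := by
    intro u v t
    have h : ‖4*u - 2*v‖^2 = 16*‖u‖^2 - 16*(u * (starRingEnd ℂ) v).re + 4*‖v‖^2 := by
      simp only [Complex.sq_norm]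
      simp only [Complex.normSq_apply, Complex.mul_re, Complex.mul_im, Complex.sub_re,
        Complex.sub_im, Complex.conj_re, Complex.conj_im]
      simp only [Complex.re_ofNat, Complex.im_ofNat]
      ring
    rw [h]
    ring
  have hRHS : (∫ z in U, ‖4 * A' z - 2 * φ z‖ ^ 2 * (lam z) ^ 2)
      = 16*(∫ z in U, ‖A' z‖^2*(lam z)^2)
        - 16*(∫ z in U, (A' z * (starRingEnd ℂ) (φ z)).re * (lam z)^2)
        + 4*(∫ z in U, ‖φ z‖^2*(lam z)^2) := by
    rw [setIntegral_congr_fun hU.measurableSet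
      (fun z _ => hkey (A' z) (φ z) (lam z))]
    have h1 : IntegrableOn (fun z => 16*(‖A' z‖^2*(lam z)^2)) U volume :=
      (haint.const_mul 16).integrableOn
    have h2 : IntegrableOn (fun z => 16*((A' z * (starRingEnd ℂ) (φ z)).re*(lam z)^2)) U volume :=
      (hbint.const_mul 16).integrableOn
    have h3 : IntegrableOn (fun z => 4*(‖φ z‖^2*(lam z)^2)) U volume :=
      (hcint.const_mul 4).integrableOn
    have h12 : IntegrableOn
        (fun z => 16*(‖A' z‖^2*(lam z)^2)
          - 16*((A' z * (starRingEnd ℂ) (φ z)).re*(lam z)^2)) U volume := h1.sub h2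
    rw [integral_add h12 h3, integral_sub h1 h2,
      integral_const_mul, integral_const_mul, integral_const_mul]
  constructor
  · rw [hA, hRHS]
    linarith
  · intro h0 z hz
    have hzero : (∫ z in U, ‖4 * Lop lam 0 (Kop lam (-1) φ) z - 2 * φ z‖ ^ 2 * (lam z) ^ 2)
        = 0 := by
      rw [setIntegral_congr_fun hU.measurableSet (g := fun _ => (0:ℝ))
        (fun w hw => by rw [h0 w hw]; simp)]
      simp
    have hle : 4 * (∫ z in U, ‖φ z‖ ^ 2 * (lam z) ^ 2) ≤ 0 := by
      rw [hA, hRHS] at hzero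
      linarith
    have hcUeq : (∫ z in U, ‖φ z‖^2 * (lam z)^2) = 0 := le_antisymm (by linarith) hcU
    have hcall : (∫ w, ‖φ w‖^2 * (lam w)^2) = 0 := by
      rw [← setIntegral_eq_integral_of_forall_compl_eq_zero
        (fun w hw => by simp [hφV w (hnotU w hw)])]
      exact hcUeq
    have hae : (fun w => ‖φ w‖^2 * (lam w)^2) =ᵐ[volume] (fun _ => (0:ℝ)) :=
      (integral_eq_zero_iff_of_nonneg (fun w => by positivity) hcint).mp hcall
    have heq : (fun w => ‖φ w‖^2 * (lam w)^2) = (fun _ => (0:ℝ)) :=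
      Continuous.ae_eq_iff_eq volume hccont continuous_const |>.mp hae
    have hz2 : ‖φ z‖^2 * (lam z)^2 = 0 := congrFun heq z
    have hlz : (lam z)^2 ≠ 0 := pow_ne_zero 2 (hpos z hz).ne'
    have : ‖φ z‖^2 = 0 := by
      rcases mul_eq_zero.mp hz2 with h | h
      · exact h
      · exact absurd h hlz
    simpa using norm_eq_zero.mp (by nlinarith [norm_nonneg (φ z)] : ‖φ z‖ = 0)
end
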